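/- arXiv:2212.09841 — 10 statements merged into one kernel-verified Lean document; each statement's English description precedes it below -/
import Mathlib

section
/- Let N, p, s, t be natural numbers and let V be a linear subspace of the space of N×N real matrices with finrank equal to p. If (s + t) * N < p, then for every family of vectors x : Fin s → (Fin N → ℝ) and w : Fin t → (Fin N → ℝ) there exist matrices A and B in V with A ≠ B such that A *ᵥ (x i) = B *ᵥ (x i) for all i : Fin s and Aᵀ *ᵥ (w j) = Bᵀ *ᵥ (w j) for all j : Fin t. (Hence a linearly parametrized family of N×N matrices with p parameters cannot be uniquely recovered from fewer than ⌈p/N⌉ matrix-vector product queries.) -/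
/-! The answers to the queries `A *ᵥ x i`, `Aᵀ *ᵥ w j` depend linearly on `A` and lie in a space
of dimension `(s + t) * N < dim V`, so this linear map has a nonzero kernel element `M ∈ V`;
then `A = M` and `B = 0` give the same answers. -/

open Matrix Module

namespace Matrix

variable {R K m n ι κ : Type*} [Fintype m] [Fintype n]

def queryMap [CommSemiring R] (x : ι → n → R) (w : κ → m → R) :
    Matrix m n R →ₗ[R] (ι → m → R) × (κ → n → R) where
  toFun A := (fun i => A *ᵥ x i, fun j => Aᵀ *ᵥ w j)
  map_add' A B := by ext <;> simp [add_mulVec]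
  map_smul' c A := by ext <;> simp [smul_mulVec]

theorem exists_mem_ne_zero_mulVec_eq_zero_of_finrank_lt [Field K] [Fintype ι] [Fintype κ]
    (V : Submodule K (Matrix m n K)) (x : ι → n → K) (w : κ → m → K)
    (h : Fintype.card ι * Fintype.card m + Fintype.card κ * Fintype.card n < finrank K V) :
    ∃ M ∈ V, M ≠ 0 ∧ (∀ i, M *ᵥ x i = 0) ∧ ∀ j, Mᵀ *ᵥ w j = 0 := by
  have hcod : finrank K ((ι → m → K) × (κ → n → K)) =
      Fintype.card ι * Fintype.card m + Fintype.card κ * Fintype.card n := by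
    simp [Module.finrank_prod, Module.finrank_pi_fintype]
  rw [← hcod] at h
  obtain ⟨⟨M, hMV⟩, hM, hM0⟩ :=
    Submodule.exists_mem_ne_zero_of_ne_bot
      (((queryMap x w).domRestrict V).ker_ne_bot_of_finrank_lt h)
  refine ⟨M, hMV, fun h0 => hM0 (Subtype.ext h0), fun i => ?_, fun j => ?_⟩
  · exact congrFun (congrArg Prod.fst hM) i
  · exact congrFun (congrArg Prod.snd hM) j

end Matrix

theorem stmt0 (N p s t : ℕ) (V : Submodule ℝ (Matrix (Fin N) (Fin N) ℝ))
    (hV : Module.finrank ℝ V = p) (h : (s + t) * N < p)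
    (x : Fin s → (Fin N → ℝ)) (w : Fin t → (Fin N → ℝ)) :
    ∃ A B : Matrix (Fin N) (Fin N) ℝ, A ∈ V ∧ B ∈ V ∧ A ≠ B ∧
      (∀ i : Fin s, A *ᵥ x i = B *ᵥ x i) ∧
      (∀ j : Fin t, Aᵀ *ᵥ w j = Bᵀ *ᵥ w j) := by
  have hdim : Fintype.card (Fin s) * Fintype.card (Fin N) +
      Fintype.card (Fin t) * Fintype.card (Fin N) < finrank ℝ V := by
    simpa [hV, add_mul] using h
  obtain ⟨M, hMV, hM0, hx, hw⟩ := exists_mem_ne_zero_mulVec_eq_zero_of_finrank_lt V x w hdim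
  exact ⟨M, 0, hMV, V.zero_mem, hM0, by simpa using hx, by simpa using hw⟩
end

section
/- Let N and k be natural numbers with 1 ≤ k < N, and let k₁, k₂ be natural numbers with min(k₁,k₂) < k and max(k₁,k₂) < N. Let X : Matrix (Fin N) (Fin k₁) ℝ and W : Matrix (Fin N) (Fin k₂) ℝ have orthonormal columns, i.e., Xᵀ * X = 1 and Wᵀ * W = 1. Then for every matrix A : Matrix (Fin N) (Fin N) ℝ with rank A ≤ k, there exists a matrix B : Matrix (Fin N) (Fin N) ℝ with B ≠ A, rank B ≤ k, B * X = A * X, and Bᵀ * W = Aᵀ * W. (Thus a rank-≤k matrix is never uniquely determined by k₁ queries to A and k₂ queries to Aᵀ under these conditions.) -/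
/-!
Perturb `A` by a rank-one matrix `u vᵀ` with `Wᵀ u = 0` and `Xᵀ v = 0`: the queries cannot see
the change. Such `u` exists since `k₂ < N`. If `rank A < k`, any `v ≠ 0` with `Xᵀ v = 0` keeps the
rank at most `k`. If `rank A = k > k₁`, the row space of `A` meets `ker Xᵀ` nontrivially, and for
`v = Aᵀ w` there we get `A + u vᵀ = (1 + u wᵀ) A`, whose rank is at most `k`. The case `k₂ < k`
follows by transposing.
-/

open Matrix

namespace Matrix

variable {K : Type*} [Field K] {m n p q : Type*}

theorem rank_add_le [Fintype n] (A B : Matrix m n K) : (A + B).rank ≤ A.rank + B.rank := by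
  classical
  unfold rank
  rw [mulVecLin_add]
  exact (Submodule.finrank_mono (LinearMap.range_add_le _ _)).trans
    (Submodule.finrank_add_le_finrank_add_finrank _ _)

theorem exists_ne_zero_vecMul_eq_zero [Fintype n] [Fintype p] (X : Matrix n p K)
    (h : Fintype.card p < Fintype.card n) : ∃ v ≠ 0, v ᵥ* X = 0 := by
  have hker : LinearMap.ker Xᵀ.mulVecLin ≠ ⊥ :=
    LinearMap.ker_ne_bot_of_finrank_lt (by simpa using h)
  obtain ⟨v, hv, hv0⟩ := Submodule.exists_mem_ne_zero_of_ne_bot hker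
  exact ⟨v, hv0, by rwa [← mulVec_transpose]⟩

theorem exists_vecMul_ne_zero_vecMul_mul_eq_zero [Fintype m] [Fintype n] [Fintype p]
    (A : Matrix m n K) (X : Matrix n p K) (h : Fintype.card p < A.rank) :
    ∃ w, w ᵥ* A ≠ 0 ∧ w ᵥ* (A * X) = 0 := by
  have hrange : A.rank = Module.finrank K (LinearMap.range Aᵀ.mulVecLin) := by
    rw [← rank_transpose]; rfl
  have hker := LinearMap.finrank_range_add_finrank_ker Xᵀ.mulVecLin
  have hXrank : Module.finrank K (LinearMap.range Xᵀ.mulVecLin) ≤ Fintype.card p := by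
    simpa using (LinearMap.range Xᵀ.mulVecLin).finrank_le
  have hnd : ¬ Disjoint (LinearMap.range Aᵀ.mulVecLin) (LinearMap.ker Xᵀ.mulVecLin) := by
    intro hd
    have := Submodule.finrank_add_finrank_le_of_disjoint hd
    simp only [Module.finrank_fintype_fun_eq_card] at this hker
    omega
  obtain ⟨v, ⟨⟨w, rfl⟩, hvX⟩, hv⟩ :=
    Submodule.exists_mem_ne_zero_of_ne_bot fun hbot => hnd (disjoint_iff.mpr hbot)
  refine ⟨w, by simpa [mulVec_transpose] using hv, ?_⟩
  rw [← vecMul_vecMul]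
  simpa [mulVec_transpose] using hvX

theorem add_vecMulVec_mul_eq [Fintype n] (A : Matrix m n K) (X : Matrix n p K) (u : m → K)
    {v : n → K} (hv : v ᵥ* X = 0) : (A + vecMulVec u v) * X = A * X := by
  rw [Matrix.add_mul, vecMulVec_mul, hv, add_eq_left]
  ext
  simp [vecMulVec_apply]

theorem transpose_add_vecMulVec_mul_eq [Fintype m] (A : Matrix m n K) (W : Matrix m q K)
    {u : m → K} (v : n → K) (hu : u ᵥ* W = 0) : (A + vecMulVec u v)ᵀ * W = Aᵀ * W := by
  rw [transpose_add, transpose_vecMulVec]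
  exact add_vecMulVec_mul_eq Aᵀ W v hu

theorem exists_ne_zero_vecMul_eq_zero_rank_add_vecMulVec_le [Fintype m] [Fintype n] [Fintype p]
    [DecidableEq m] {k : ℕ} (A : Matrix m n K) (X : Matrix n p K) (u : m → K)
    (hA : A.rank ≤ k) (hpk : Fintype.card p < k) (hpn : Fintype.card p < Fintype.card n) :
    ∃ v ≠ 0, v ᵥ* X = 0 ∧ (A + vecMulVec u v).rank ≤ k := by
  rcases hA.lt_or_eq with hlt | heq
  · obtain ⟨v, hv, hvX⟩ := exists_ne_zero_vecMul_eq_zero X hpn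
    refine ⟨v, hv, hvX, ?_⟩
    have := rank_add_le A (vecMulVec u v)
    have := rank_vecMulVec_le u v
    omega
  · obtain ⟨w, hw, hwX⟩ := exists_vecMul_ne_zero_vecMul_mul_eq_zero A X (heq ▸ hpk)
    refine ⟨w ᵥ* A, hw, by rwa [vecMul_vecMul], ?_⟩
    rw [show A + vecMulVec u (w ᵥ* A) = (1 + vecMulVec u w) * A by
      rw [Matrix.add_mul, Matrix.one_mul, vecMulVec_mul]]
    exact (rank_mul_le_right _ _).trans hA

theorem exists_ne_rank_le_mul_eq_transpose_mul_eq [Fintype m] [Fintype n] [Fintype p]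
    [Fintype q] {k : ℕ} (A : Matrix m n K) (X : Matrix n p K) (W : Matrix m q K)
    (hA : A.rank ≤ k) (hpk : Fintype.card p < k) (hpn : Fintype.card p < Fintype.card n)
    (hqm : Fintype.card q < Fintype.card m) :
    ∃ B : Matrix m n K, B ≠ A ∧ B.rank ≤ k ∧ B * X = A * X ∧ Bᵀ * W = Aᵀ * W := by
  classical
  obtain ⟨u, hu, huW⟩ := exists_ne_zero_vecMul_eq_zero W hqm
  obtain ⟨v, hv, hvX, hrank⟩ :=
    exists_ne_zero_vecMul_eq_zero_rank_add_vecMulVec_le A X u hA hpk hpn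
  refine ⟨A + vecMulVec u v, ?_, hrank, add_vecMulVec_mul_eq A X u hvX,
    transpose_add_vecMulVec_mul_eq A W v huW⟩
  obtain ⟨i, hi⟩ : ∃ i, u i ≠ 0 := Function.ne_iff.mp hu
  obtain ⟨j, hj⟩ : ∃ j, v j ≠ 0 := Function.ne_iff.mp hv
  intro h
  simpa [vecMulVec_apply, hi, hj] using congr($h i j)

end Matrix

theorem stmt1_general (N k k₁ k₂ : ℕ)
    (hmin : min k₁ k₂ < k) (hmax : max k₁ k₂ < N)
    (X : Matrix (Fin N) (Fin k₁) ℝ) (W : Matrix (Fin N) (Fin k₂) ℝ)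
    (A : Matrix (Fin N) (Fin N) ℝ) (hA : A.rank ≤ k) :
    ∃ B : Matrix (Fin N) (Fin N) ℝ, B ≠ A ∧ B.rank ≤ k ∧
      B * X = A * X ∧ Bᵀ * W = Aᵀ * W := by
  have hk₁ : k₁ < N := (le_max_left _ _).trans_lt hmax
  have hk₂ : k₂ < N := (le_max_right _ _).trans_lt hmax
  rcases min_lt_iff.mp hmin with h₁ | h₂
  · exact exists_ne_rank_le_mul_eq_transpose_mul_eq A X W hA
      (by simpa using h₁) (by simpa using hk₁) (by simpa using hk₂)
  · obtain ⟨B, hne, hrank, hBW, hBX⟩ :=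
      exists_ne_rank_le_mul_eq_transpose_mul_eq (k := k) Aᵀ W X (by rwa [rank_transpose])
        (by simpa using h₂) (by simpa using hk₂) (by simpa using hk₁)
    refine ⟨Bᵀ, fun h => hne (by rw [← h, transpose_transpose]), by rwa [rank_transpose], ?_, ?_⟩
    · rwa [transpose_transpose] at hBX
    · rw [transpose_transpose, hBW]

theorem stmt1 (N k k₁ k₂ : ℕ) (hk1 : 1 ≤ k) (hkN : k < N)
    (hmin : min k₁ k₂ < k) (hmax : max k₁ k₂ < N)
    (X : Matrix (Fin N) (Fin k₁) ℝ) (W : Matrix (Fin N) (Fin k₂) ℝ)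
    (hX : Xᵀ * X = 1) (hW : Wᵀ * W = 1)
    (A : Matrix (Fin N) (Fin N) ℝ) (hA : A.rank ≤ k) :
    ∃ B : Matrix (Fin N) (Fin N) ℝ, B ≠ A ∧ B.rank ≤ k ∧
      B * X = A * X ∧ Bᵀ * W = Aᵀ * W :=
  stmt1_general N k k₁ k₂ hmin hmax X W A hA
end

section
/- Let N ≥ 1. For every symmetric matrix A : Matrix (Fin N) (Fin N) ℝ and every family of vectors x : Fin (N-1) → (Fin N → ℝ), there exists a symmetric matrix B : Matrix (Fin N) (Fin N) ℝ with B ≠ A such that B *ᵥ (x j) = A *ᵥ (x j) for all j : Fin (N-1). (An N×N symmetric matrix is never uniquely determined by N−1 matrix-vector product queries.) -/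
/-!
Fewer than `N` linear constraints `x j ⬝ᵥ v = 0` have a nonzero solution `v`. The rank-one
perturbation `A + v vᵀ` is then symmetric, differs from `A`, and agrees with `A` on every `x j`
because `v vᵀ x j = (v ⬝ᵥ x j) v = 0`.
-/

open Matrix

namespace Matrix

theorem isSymm_vecMulVec_self {α n : Type*} [CommMagma α] (v : n → α) : (vecMulVec v v).IsSymm :=
  transpose_vecMulVec v v

variable {K : Type*} [Field K] {m n : Type*} [Fintype m] [Fintype n]

theorem exists_ne_zero_forall_dotProduct_eq_zero (x : m → n → K)
    (h : Fintype.card m < Fintype.card n) : ∃ v ≠ 0, ∀ j, x j ⬝ᵥ v = 0 := by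
  obtain ⟨v, hv, hv0⟩ := Submodule.exists_mem_ne_zero_of_ne_bot
    (LinearMap.ker_ne_bot_of_finrank_lt (f := (of x).mulVecLin) (by simpa using h))
  exact ⟨v, hv0, fun j => congrFun hv j⟩

theorem exists_isSymm_ne_forall_mulVec_eq {A : Matrix n n K} (hA : A.IsSymm) (x : m → n → K)
    (h : Fintype.card m < Fintype.card n) :
    ∃ B : Matrix n n K, B.IsSymm ∧ B ≠ A ∧ ∀ j, B *ᵥ x j = A *ᵥ x j := by
  obtain ⟨v, hv0, hv⟩ := exists_ne_zero_forall_dotProduct_eq_zero x h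
  refine ⟨A + vecMulVec v v, hA.add (isSymm_vecMulVec_self v), ?_, fun j => ?_⟩
  · simpa using vecMulVec_ne_zero hv0 hv0
  · rw [add_mulVec, vecMulVec_mulVec, dotProduct_comm, hv j]
    simp

end Matrix

theorem stmt2 (N : ℕ) (hN : 1 ≤ N) (A : Matrix (Fin N) (Fin N) ℝ) (hA : A.IsSymm)
    (x : Fin (N - 1) → (Fin N → ℝ)) :
    ∃ B : Matrix (Fin N) (Fin N) ℝ, B.IsSymm ∧ B ≠ A ∧
      ∀ j : Fin (N - 1), B *ᵥ x j = A *ᵥ x j :=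
  exists_isSymm_ne_forall_mulVec_eq hA x (by simp only [Fintype.card_fin]; omega)
end

section
/- Let N ≥ 1. For every orthogonal matrix A : Matrix (Fin N) (Fin N) ℝ (i.e., Aᵀ * A = 1) and every family of vectors x : Fin (N-1) → (Fin N → ℝ), there exists an orthogonal matrix B : Matrix (Fin N) (Fin N) ℝ with B ≠ A such that B *ᵥ (x j) = A *ᵥ (x j) for all j : Fin (N-1). (An N×N orthogonal matrix is never uniquely determined by N−1 matrix-vector product queries; take B = A(I − 2vvᵀ/(vᵀv)) for v a nonzero vector orthogonal to all x j.) -/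
/-!
The queries `x j` span a subspace of dimension at most `N - 1`, so some `v ≠ 0` is orthogonal to
all of them. The Householder reflection `H` in `v⊥` is orthogonal, fixes every `x j` and sends
`v` to `-v`; hence `B = A * H` answers all queries like `A` but differs from it.
-/

open Matrix

theorem exists_ne_zero_forall_dotProduct_eq_zero_of_card_lt {K m n : Type*} [Field K]
    [Fintype m] [Fintype n] (x : m → n → K) (h : Fintype.card m < Fintype.card n) :
    ∃ v ≠ 0, ∀ j, x j ⬝ᵥ v = 0 := by
  have hker : LinearMap.ker (of x).mulVecLin ≠ ⊥ :=
    LinearMap.ker_ne_bot_of_finrank_lt (by simpa using h)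
  obtain ⟨v, hv, hv0⟩ := Submodule.exists_mem_ne_zero_of_ne_bot hker
  exact ⟨v, hv0, congrFun hv⟩

section Householder

variable {K n : Type*} [Field K] [Fintype n] [DecidableEq n]

def householder (v : n → K) : Matrix n n K :=
  1 - (2 / (v ⬝ᵥ v)) • vecMulVec v v

variable (v : n → K)

theorem householder_transpose : (householder v)ᵀ = householder v := by
  simp [householder, transpose_sub, transpose_smul, transpose_vecMulVec]

theorem householder_mulVec_of_dotProduct_eq_zero {w : n → K} (hw : v ⬝ᵥ w = 0) :
    householder v *ᵥ w = w := by
  simp [householder, sub_mulVec, smul_mulVec, vecMulVec_mulVec, hw]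

theorem householder_mulVec_self (hv : v ⬝ᵥ v ≠ 0) : householder v *ᵥ v = -v := by
  rw [householder, sub_mulVec, one_mulVec, smul_mulVec, vecMulVec_mulVec, op_smul_eq_smul,
    smul_smul, div_mul_cancel₀ _ hv]
  module

theorem householder_mul_self (hv : v ⬝ᵥ v ≠ 0) : householder v * householder v = 1 := by
  have hsq : vecMulVec v v * vecMulVec v v = (v ⬝ᵥ v) • vecMulVec v v := by
    rw [vecMulVec_mul_vecMulVec, vecMulVec_smul]
  simp only [householder, sub_mul, mul_sub, mul_one, one_mul, smul_mul_assoc, mul_smul_comm, hsq,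
    smul_smul]
  match_scalars
  · ring
  · field_simp
    ring

theorem householder_transpose_mul_self (hv : v ⬝ᵥ v ≠ 0) :
    (householder v)ᵀ * householder v = 1 := by
  rw [householder_transpose, householder_mul_self v hv]

theorem householder_ne_one [NeZero (2 : K)] (hv : v ⬝ᵥ v ≠ 0) : householder v ≠ 1 := by
  intro h
  have hneg : -v = v := by rw [← householder_mulVec_self v hv, h, one_mulVec]
  have h2v : (2 : K) • v = 0 := by rw [two_smul]; nth_rw 1 [← hneg]; exact neg_add_cancel v
  simp [(smul_eq_zero.1 h2v).resolve_left two_ne_zero] at hv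

end Householder

theorem transpose_mul_self_mul_eq_one {R n : Type*} [CommRing R] [Fintype n] [DecidableEq n]
    {A B : Matrix n n R} (hA : Aᵀ * A = 1) (hB : Bᵀ * B = 1) : (A * B)ᵀ * (A * B) = 1 := by
  rw [transpose_mul, mul_assoc, ← mul_assoc Aᵀ, hA, one_mul, hB]

theorem stmt4 (N : ℕ) (hN : 1 ≤ N) (A : Matrix (Fin N) (Fin N) ℝ) (hA : Aᵀ * A = 1)
    (x : Fin (N - 1) → (Fin N → ℝ)) :
    ∃ B : Matrix (Fin N) (Fin N) ℝ, Bᵀ * B = 1 ∧ B ≠ A ∧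
      ∀ j : Fin (N - 1), B *ᵥ x j = A *ᵥ x j := by
  obtain ⟨v, hv0, hxv⟩ :=
    exists_ne_zero_forall_dotProduct_eq_zero_of_card_lt x (by simp only [Fintype.card_fin]; omega)
  have hv : v ⬝ᵥ v ≠ 0 := by simpa [dotProduct_self_eq_zero] using hv0
  refine ⟨A * householder v,
    transpose_mul_self_mul_eq_one hA (householder_transpose_mul_self v hv), fun hBA => ?_,
    fun j => ?_⟩
  · apply householder_ne_one v hv
    simpa [← mul_assoc, hA] using congrArg (Aᵀ * ·) hBA
  · rw [← mulVec_mulVec, householder_mulVec_of_dotProduct_eq_zero v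
      (by rw [dotProduct_comm]; exact hxv j)]
end

section
/- A matrix A : Matrix (Fin N) (Fin N) ℝ is tridiagonal if A i j = 0 whenever the natural numbers i and j satisfy i + 1 < j or j + 1 < i. For r ∈ {0,1,2} let x_r : Fin N → ℝ be the vector with x_r j = 1 if (j : ℕ) % 3 = r and 0 otherwise. If A and B are both tridiagonal and A *ᵥ x_r = B *ᵥ x_r for r = 0, 1, 2, then A = B. (A tridiagonal matrix is uniquely determined by three matrix-vector products with period-3 indicator vectors.) -/
open Matrix

theorem Matrix.mulVec_apply_eq_of_forall_ne {m n R : Type*} [Fintype n]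
    [NonUnitalNonAssocSemiring R] (M : Matrix m n R) (v : n → R) (i : m) (j : n)
    (h : ∀ k ≠ j, M i k * v k = 0) : (M *ᵥ v) i = M i j * v j :=
  Finset.sum_eq_single j (fun k _ hk => h k hk) (by simp)

/-- Within distance one of `j` no other index has the residue of `j` mod 3, so the
period-3 indicator of that residue reads off the single band entry `C i j`. -/
theorem Matrix.mulVec_mod_three_indicator_apply_of_tridiagonal {N : ℕ} {R : Type*}
    [NonAssocSemiring R] (C : Matrix (Fin N) (Fin N) R)
    (hC : ∀ i j : Fin N, ((i : ℕ) + 1 < (j : ℕ) ∨ (j : ℕ) + 1 < (i : ℕ)) → C i j = 0)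
    {i j : Fin N} (hij : ¬((i : ℕ) + 1 < (j : ℕ) ∨ (j : ℕ) + 1 < (i : ℕ))) :
    (C *ᵥ fun k : Fin N => if (k : ℕ) % 3 = (j : ℕ) % 3 then (1 : R) else 0) i = C i j := by
  rw [mulVec_apply_eq_of_forall_ne _ _ i j, if_pos rfl, mul_one]
  intro k hkj
  by_cases hk : (k : ℕ) % 3 = (j : ℕ) % 3
  · rw [hC i k (by omega), zero_mul]
  · rw [if_neg hk, mul_zero]

theorem stmt6 (N : ℕ) (A B : Matrix (Fin N) (Fin N) ℝ)
    (hA : ∀ i j : Fin N, ((i : ℕ) + 1 < (j : ℕ) ∨ (j : ℕ) + 1 < (i : ℕ)) → A i j = 0)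
    (hB : ∀ i j : Fin N, ((i : ℕ) + 1 < (j : ℕ) ∨ (j : ℕ) + 1 < (i : ℕ)) → B i j = 0)
    (h : ∀ r : Fin 3,
      A *ᵥ (fun j : Fin N => if (j : ℕ) % 3 = (r : ℕ) then (1 : ℝ) else 0) =
      B *ᵥ (fun j : Fin N => if (j : ℕ) % 3 = (r : ℕ) then (1 : ℝ) else 0)) :
    A = B := by
  ext i j
  by_cases hfar : (i : ℕ) + 1 < (j : ℕ) ∨ (j : ℕ) + 1 < (i : ℕ)
  · rw [hA i j hfar, hB i j hfar]
  · have hrow := congrFun (h ⟨(j : ℕ) % 3, Nat.mod_lt _ three_pos⟩) i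
    rwa [mulVec_mod_three_indicator_apply_of_tridiagonal A hA hfar,
      mulVec_mod_three_indicator_apply_of_tridiagonal B hB hfar] at hrow
end

section
/- A matrix A : Matrix (Fin N) (Fin N) ℝ is tridiagonal if A i j = 0 whenever the natural numbers i and j satisfy i + 1 < j or j + 1 < i. For r ∈ {0,1} let x_r : Fin N → ℝ be the vector with x_r j = 1 if (j : ℕ) % 2 = r and 0 otherwise. If A and B are both symmetric (Aᵀ = A and Bᵀ = B) and tridiagonal, and A *ᵥ x_0 = B *ᵥ x_0 and A *ᵥ x_1 = B *ᵥ x_1, then A = B. (A symmetric tridiagonal matrix is uniquely determined by two matrix-vector products with alternating 0–1 vectors.) -/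
/-!
Let `D = A - B`: it is symmetric, tridiagonal, and kills both alternating `0`–`1` vectors. In
row `i`, the vector supported on the parity of `i` picks out only the diagonal entry `D i i`,
while the other vector picks out `D i (i - 1) + D i (i + 1)`. Hence the diagonal vanishes, and
going down the rows, symmetry turns `D i (i - 1) = D (i - 1) i = 0` into `D i (i + 1) = 0`.
-/

open Matrix

namespace Matrix

variable {R : Type*} {N : ℕ}

def IsTridiagonal [Zero R] (M : Matrix (Fin N) (Fin N) R) : Prop :=
  ∀ i j : Fin N, (i : ℕ) + 1 < j ∨ (j : ℕ) + 1 < i → M i j = 0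

def parityIndicator [Zero R] [One R] (r : ℕ) : Fin N → R :=
  fun j => if (j : ℕ) % 2 = r then 1 else 0

lemma IsTridiagonal.sub [AddGroup R] {A B : Matrix (Fin N) (Fin N) R}
    (hA : A.IsTridiagonal) (hB : B.IsTridiagonal) : (A - B).IsTridiagonal :=
  fun i j h => by rw [sub_apply, hA i j h, hB i j h, sub_zero]

section

variable [NonAssocSemiring R] {M : Matrix (Fin N) (Fin N) R}

lemma IsTridiagonal.mulVec_parityIndicator_apply_self (hM : M.IsTridiagonal) (i : Fin N) :
    (M *ᵥ parityIndicator (i % 2)) i = M i i := by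
  rw [mulVec, dotProduct, Finset.sum_eq_single i]
  · simp [parityIndicator]
  · intro j _ hji
    have hne : (j : ℕ) ≠ i := Fin.val_ne_of_ne hji
    by_cases hj : (j : ℕ) % 2 = i % 2
    · rw [hM i j (by omega), zero_mul]
    · simp [parityIndicator, hj]
  · simp

lemma IsTridiagonal.mulVec_parityIndicator_apply_of_val_eq_succ (hM : M.IsTridiagonal)
    {i j : Fin N} (hij : (j : ℕ) = i + 1) (hprev : ∀ k : Fin N, (k : ℕ) + 1 = i → M i k = 0) :
    (M *ᵥ parityIndicator (j % 2)) i = M i j := by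
  rw [mulVec, dotProduct, Finset.sum_eq_single j]
  · simp [parityIndicator]
  · intro k _ hkj
    have hne : (k : ℕ) ≠ j := Fin.val_ne_of_ne hkj
    by_cases hk : (k : ℕ) % 2 = j % 2
    · by_cases hki : (k : ℕ) + 1 = i
      · rw [hprev k hki, zero_mul]
      · rw [hM i k (by omega), zero_mul]
    · simp [parityIndicator, hk]
  · simp

variable (hM : M.IsTridiagonal) (hMs : Mᵀ = M)
  (hpar : ∀ i j : Fin N, (M *ᵥ parityIndicator (j % 2)) i = 0)
include hM hMs hpar

lemma IsTridiagonal.apply_of_val_eq_succ_eq_zero {i j : Fin N} (hij : (j : ℕ) = i + 1) :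
    M i j = 0 := by
  obtain ⟨n, hn⟩ : ∃ n, (i : ℕ) = n := ⟨_, rfl⟩
  induction n generalizing i j with
  | zero =>
    rw [← hM.mulVec_parityIndicator_apply_of_val_eq_succ hij (by omega), hpar]
  | succ n ih =>
    refine hM.mulVec_parityIndicator_apply_of_val_eq_succ hij (fun k hk => ?_) ▸ hpar i j
    rw [← congrFun (congrFun hMs i) k, transpose_apply]
    exact ih (by omega) (by omega)

theorem IsTridiagonal.eq_zero_of_mulVec_parityIndicator : M = 0 := by
  ext i j
  rw [zero_apply]
  rcases (by omega : (j : ℕ) = i ∨ (j : ℕ) = i + 1 ∨ (i : ℕ) = j + 1 ∨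
      ((i : ℕ) + 1 < j ∨ (j : ℕ) + 1 < i)) with h | h | h | h
  · rw [Fin.ext h, ← hM.mulVec_parityIndicator_apply_self i, hpar]
  · exact hM.apply_of_val_eq_succ_eq_zero hMs hpar h
  · rw [← congrFun (congrFun hMs i) j, transpose_apply]
    exact hM.apply_of_val_eq_succ_eq_zero hMs hpar h
  · exact hM i j h

end

end Matrix

theorem stmt7 (N : ℕ) (A B : Matrix (Fin N) (Fin N) ℝ)
    (hAs : Aᵀ = A) (hBs : Bᵀ = B)
    (hA : ∀ i j : Fin N, ((i : ℕ) + 1 < (j : ℕ) ∨ (j : ℕ) + 1 < (i : ℕ)) → A i j = 0)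
    (hB : ∀ i j : Fin N, ((i : ℕ) + 1 < (j : ℕ) ∨ (j : ℕ) + 1 < (i : ℕ)) → B i j = 0)
    (h0 : A *ᵥ (fun j : Fin N => if (j : ℕ) % 2 = 0 then (1 : ℝ) else 0) =
          B *ᵥ (fun j : Fin N => if (j : ℕ) % 2 = 0 then (1 : ℝ) else 0))
    (h1 : A *ᵥ (fun j : Fin N => if (j : ℕ) % 2 = 1 then (1 : ℝ) else 0) =
          B *ᵥ (fun j : Fin N => if (j : ℕ) % 2 = 1 then (1 : ℝ) else 0)) :
    A = B := by
  have hsymm : (A - B)ᵀ = A - B := by rw [transpose_sub, hAs, hBs]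
  have hpar : ∀ i j : Fin N, ((A - B) *ᵥ parityIndicator (j % 2)) i = 0 := by
    intro i j
    rcases Nat.mod_two_eq_zero_or_one j with h | h
    · rw [h, sub_mulVec, Pi.sub_apply]
      exact sub_eq_zero.mpr (congrFun h0 i)
    · rw [h, sub_mulVec, Pi.sub_apply]
      exact sub_eq_zero.mpr (congrFun h1 i)
  exact sub_eq_zero.mp ((IsTridiagonal.sub hA hB).eq_zero_of_mulVec_parityIndicator hsymm hpar)
end

section
/- Let N and k be natural numbers and let G, H, X, Y : Matrix (Fin N) (Fin k) ℝ. If the k×k matrices Hᵀ * X and Yᵀ * G are invertible (IsUnit), then (G * Hᵀ * X) * (Yᵀ * G * Hᵀ * X)⁻¹ * (Yᵀ * G * Hᵀ) = G * Hᵀ. (The generalized Nyström formula exactly recovers the rank-≤k matrix G Hᵀ from its products with X and the products of its transpose with Y.) -/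
open Matrix

theorem Matrix.mul_mul_inv_mul_mul_eq_mul {m n k R : Type*} [Fintype k] [DecidableEq k]
    [CommRing R] (A : Matrix m k R) (B : Matrix k n R) (P Q : Matrix k k R)
    (hP : IsUnit P) (hQ : IsUnit Q) :
    A * P * (Q * P)⁻¹ * (Q * B) = A * B := by
  rw [isUnit_iff_isUnit_det] at hP hQ
  rw [mul_inv_rev, ← Matrix.mul_assoc (A * P), mul_nonsing_inv_cancel_right _ _ hP,
    Matrix.mul_assoc, nonsing_inv_mul_cancel_left _ _ hQ]

theorem stmt14 (N k : ℕ) (G H X Y : Matrix (Fin N) (Fin k) ℝ)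
    (h1 : IsUnit (Hᵀ * X)) (h2 : IsUnit (Yᵀ * G)) :
    (G * Hᵀ * X) * (Yᵀ * G * Hᵀ * X)⁻¹ * (Yᵀ * G * Hᵀ) = G * Hᵀ := by
  simpa only [Matrix.mul_assoc] using Matrix.mul_mul_inv_mul_mul_eq_mul G Hᵀ _ _ h1 h2
end

section
/- Let N, s be natural numbers and let A : Matrix (Fin N) (Fin N) ℝ be a matrix with rank A ≤ s. Then for almost every X : Matrix (Fin N) (Fin s) ℝ with respect to the Lebesgue (volume) measure on the space of N×s real matrices, rank (A * X) = rank A. (Multiplying a rank-≤s matrix by a random N×s matrix preserves its rank with probability 1; this is the basis of the randomized SVD recovery guarantee.) -/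
/-!
Let `M(x)` be a matrix whose entries are real polynomials in `x`. If some column selection
`M_c` has full rank at one point, then the Gram determinant `det (M_cᵀ M_c)` is a nonzero
polynomial, and a nonzero real polynomial vanishes only on a null set (Fubini, by induction on
the number of variables). Hence `rank M(x) ≥ rank M(x₀)` for almost every `x`. Apply this to
`M(X) = A * X`: since `rank A ≤ s`, a matrix `X₀` routing `rank A` independent columns of `A`
into the `s` available slots gives `rank (A * X₀) = rank A`.
-/

open Matrix MeasureTheory

namespace MvPolynomial

theorem ae_eval_ne_zero_of_fin : ∀ {n : ℕ} {p : MvPolynomial (Fin n) ℝ}, p ≠ 0 →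
    ∀ᵐ x : Fin n → ℝ, eval x p ≠ 0
  | 0, p, hp => by
    obtain ⟨a, rfl⟩ := C_surjective (Fin 0) p
    exact ae_of_all _ fun x => by simpa using hp
  | n + 1, p, hp => by
    set q := finSuccEquiv ℝ n p
    obtain ⟨k, hk⟩ : ∃ k, q.coeff k ≠ 0 := by
      by_contra! h
      exact hp ((finSuccEquiv ℝ n).injective (by simpa [q] using Polynomial.ext (q := 0) h))
    have hmeas : MeasurableSet {z : ℝ × (Fin n → ℝ) | eval (Fin.cons z.1 z.2) p ≠ 0} :=
      ((continuous_eval p).comp (continuous_fst.finCons continuous_snd)).measurable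
        (measurableSet_singleton 0).compl
    have hfibers : ∀ᵐ y : Fin n → ℝ, ∀ᵐ t : ℝ, eval (Fin.cons t y) p ≠ 0 := by
      filter_upwards [ae_eval_ne_zero_of_fin hk] with y hy
      have hqy : q.map (eval y) ≠ 0 := fun h => hy (by simpa using congrArg (·.coeff k) h)
      simp_rw [ae_iff, not_not, eval_eq_eval_mv_eval']
      exact (Polynomial.finite_setOfPred_isRoot hqy).measure_zero _
    have hprod : ∀ᵐ z : ℝ × (Fin n → ℝ), eval (Fin.cons z.1 z.2) p ≠ 0 := by
      rw [Measure.volume_eq_prod, Measure.ae_prod_iff_ae_ae hmeas, Measure.ae_ae_comm hmeas]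
      exact hfibers
    have hcons := measurePreserving_piFinSuccAbove (fun _ : Fin (n + 1) => (volume : Measure ℝ)) 0
    filter_upwards [hcons.quasiMeasurePreserving.ae hprod] with x hx
    simpa [Fin.removeNth] using hx

theorem ae_eval_ne_zero {ι : Type*} [Fintype ι] {p : MvPolynomial ι ℝ} (hp : p ≠ 0) :
    ∀ᵐ x : ι → ℝ, eval x p ≠ 0 := by
  let e := Fintype.equivFin ι
  have hrename : rename e p ≠ 0 :=
    (rename_injective e e.injective).ne_iff' (map_zero _) |>.mpr hp
  have hreindex := volume_measurePreserving_piCongrLeft (fun _ => ℝ) e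
  filter_upwards [hreindex.quasiMeasurePreserving.ae (ae_eval_ne_zero_of_fin hrename)] with x hx
  simpa [eval_rename, Function.comp_def, MeasurableEquiv.piCongrLeft_apply_apply] using hx

end MvPolynomial

theorem measurePreserving_uncurry_pi {ι κ α : Type*} [Fintype ι] [Fintype κ]
    [MeasurableSpace α] (μ : Measure α) [SigmaFinite μ] :
    MeasurePreserving (Function.uncurry : (ι → κ → α) → ι × κ → α)
      (Measure.pi fun _ => Measure.pi fun _ => μ) (Measure.pi fun _ => μ) := by
  have hmeas : Measurable (Function.uncurry : (ι → κ → α) → ι × κ → α) :=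
    measurable_pi_lambda _ fun q => (measurable_pi_apply q.2).comp (measurable_pi_apply q.1)
  refine ⟨hmeas, (Measure.pi_eq fun E hE => ?_).symm⟩
  have hpre : Function.uncurry ⁻¹' Set.univ.pi E =
      Set.univ.pi fun i => Set.univ.pi fun j => E (i, j) := by
    ext X
    simp [Set.mem_pi, Prod.forall]
  rw [Measure.map_apply hmeas (MeasurableSet.univ_pi hE), hpre, Measure.pi_pi]
  simp_rw [Measure.pi_pi]
  rw [Fintype.prod_prod_type]

namespace Matrix

variable {m n K : Type*}

theorem rank_eq_card_iff_det_ne_zero [Field K] [Fintype n] [DecidableEq n] {A : Matrix n n K} :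
    A.rank = Fintype.card n ↔ A.det ≠ 0 := by
  refine ⟨fun h => ?_, rank_of_det_ne_zero⟩
  have hrange : LinearMap.range A.mulVecLin = ⊤ :=
    Submodule.eq_top_of_finrank_eq (by rw [← rank, h, Module.finrank_fintype_fun_eq_card])
  have hsurj : Function.Surjective A.mulVec := LinearMap.range_eq_top.mp hrange
  exact ((isUnit_iff_isUnit_det A).mp (mulVec_surjective_iff_isUnit.mp hsurj)).ne_zero

theorem rank_eq_card_iff_det_transpose_mul_self_ne_zero [Field K] [LinearOrder K]
    [IsStrictOrderedRing K] [Fintype m] [Fintype n] [DecidableEq n] {A : Matrix m n K} :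
    A.rank = Fintype.card n ↔ (Aᵀ * A).det ≠ 0 := by
  rw [← rank_eq_card_iff_det_ne_zero, rank_transpose_mul_self]

theorem exists_rank_submatrix_cols_eq_rank [Field K] [Fintype m] [Fintype n] (A : Matrix m n K) :
    ∃ c : Fin A.rank → n, (A.submatrix id c).rank = A.rank := by
  obtain ⟨κ, c, hc, hspan, hli⟩ := exists_linearIndependent' K A.col
  have : Fintype κ := Fintype.ofInjective c hc
  have hcard : Fintype.card κ = A.rank := by
    rw [rank_eq_finrank_span_cols, ← hspan, finrank_span_eq_card hli]
  have hcols : (A.submatrix id c).rank = Fintype.card κ := by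
    rw [← rank_transpose]
    exact LinearIndependent.rank_matrix hli
  let e := Fintype.equivFinOfCardEq hcard
  exact ⟨c ∘ e.symm,
    (rank_submatrix (A.submatrix id c) (Equiv.refl m) e.symm).trans (hcols.trans hcard)⟩

theorem exists_rank_mul_eq_rank {o : Type*} [Field K] [Fintype m] [Fintype n] [Fintype o]
    [DecidableEq n] [DecidableEq o] (A : Matrix m n K) (h : A.rank ≤ Fintype.card o) :
    ∃ X : Matrix n o K, (A * X).rank = A.rank := by
  obtain ⟨c, hc⟩ := A.exists_rank_submatrix_cols_eq_rank
  obtain ⟨f⟩ : Nonempty (Fin A.rank ↪ o) := Function.Embedding.nonempty_of_card_le (by simpa)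
  let Q : Matrix (Fin A.rank) o K := (1 : Matrix o o K).submatrix f id
  have hQ : Q * Qᵀ = 1 := by
    ext i j
    simp [Q, mul_apply, one_apply, f.injective.eq_iff]
  refine ⟨(1 : Matrix n n K).submatrix id c * Q, le_antisymm (rank_mul_le_left _ _) ?_⟩
  calc A.rank = (A.submatrix id c).rank := hc.symm
    _ = (A * ((1 : Matrix n n K).submatrix id c * Q) * Qᵀ).rank := by
      rw [← Matrix.mul_assoc, Matrix.mul_assoc _ Q, hQ, Matrix.mul_one]
      simpa using congrArg rank (mul_submatrix_one (Equiv.refl n) c A).symm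
    _ ≤ _ := rank_mul_le_left _ _

theorem ae_rank_map_eval_eq_card {σ : Type*} [Fintype σ] [Fintype m] [Fintype n] [DecidableEq n]
    (M : Matrix m n (MvPolynomial σ ℝ)) {x₀ : σ → ℝ}
    (h₀ : (M.map (MvPolynomial.eval x₀)).rank = Fintype.card n) :
    ∀ᵐ x : σ → ℝ, (M.map (MvPolynomial.eval x)).rank = Fintype.card n := by
  have heval (x : σ → ℝ) : MvPolynomial.eval x (Mᵀ * M).det
      = ((M.map (MvPolynomial.eval x))ᵀ * M.map (MvPolynomial.eval x)).det := by
    rw [RingHom.map_det, RingHom.mapMatrix_apply, Matrix.map_mul, transpose_map]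
  have hdet : (Mᵀ * M).det ≠ 0 := fun h => by
    rw [rank_eq_card_iff_det_transpose_mul_self_ne_zero, ← heval, h, map_zero] at h₀
    exact h₀ rfl
  filter_upwards [MvPolynomial.ae_eval_ne_zero hdet] with x hx
  rwa [rank_eq_card_iff_det_transpose_mul_self_ne_zero, ← heval]

theorem ae_rank_le_rank_map_eval {σ : Type*} [Fintype σ] [Fintype m] [Fintype n]
    (M : Matrix m n (MvPolynomial σ ℝ)) (x₀ : σ → ℝ) :
    ∀ᵐ x : σ → ℝ,
      (M.map (MvPolynomial.eval x₀)).rank ≤ (M.map (MvPolynomial.eval x)).rank := by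
  obtain ⟨c, hc⟩ := (M.map (MvPolynomial.eval x₀)).exists_rank_submatrix_cols_eq_rank
  filter_upwards [(M.submatrix id c).ae_rank_map_eval_eq_card (x₀ := x₀)
    (by rw [← submatrix_map, hc, Fintype.card_fin])] with x hx
  calc (M.map (MvPolynomial.eval x₀)).rank
      = ((M.map (MvPolynomial.eval x)).submatrix id c).rank := by
        rw [submatrix_map, hx, Fintype.card_fin]
    _ ≤ _ := rank_submatrix_le _ _ _

theorem map_eval_map_C_mul_mvPolynomialX {l : Type*} {R : Type*} [Fintype m] [CommSemiring R]
    (A : Matrix l m R) (X : Matrix m n R) :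
    (A.map (MvPolynomial.C : R →+* MvPolynomial (m × n) R) * mvPolynomialX m n R).map
      (MvPolynomial.eval fun p => X p.1 p.2) = A * X := by
  ext i j
  simp [mul_apply]

end Matrix

theorem stmt16 (N s : ℕ) (A : Matrix (Fin N) (Fin N) ℝ) (hA : A.rank ≤ s) :
    ∀ᵐ X : Fin N → Fin s → ℝ, (A * Matrix.of X).rank = A.rank := by
  let M := A.map (MvPolynomial.C : ℝ →+* MvPolynomial (Fin N × Fin s) ℝ) *
    mvPolynomialX (Fin N) (Fin s) ℝ
  have hM (Y : Matrix (Fin N) (Fin s) ℝ) : M.map (MvPolynomial.eval fun p => Y p.1 p.2) = A * Y :=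
    map_eval_map_C_mul_mvPolynomialX A Y
  obtain ⟨X₀, hX₀⟩ := A.exists_rank_mul_eq_rank (o := Fin s) (by simpa using hA)
  filter_upwards [(measurePreserving_uncurry_pi volume).quasiMeasurePreserving.ae
    (M.ae_rank_le_rank_map_eval fun p => X₀ p.1 p.2)] with X hX
  refine le_antisymm (rank_mul_le_left _ _) ?_
  calc A.rank = (M.map (MvPolynomial.eval fun p => X₀ p.1 p.2)).rank := by rw [hM, hX₀]
    _ ≤ (M.map (MvPolynomial.eval fun p => X p.1 p.2)).rank := hX
    _ = (A * of X).rank := congrArg rank (hM (of X))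
end

section
/- Let A : Matrix (Fin N) (Fin N) ℝ and let p, q, p', q' be natural numbers. Suppose X̃ : Matrix (Fin N) (Fin p) ℝ and W̃ : Matrix (Fin N) (Fin q) ℝ satisfy X̃ᵀ * X̃ = 1 and W̃ᵀ * W̃ = 1, that there exist M₁, M₂ with X̃ = Aᵀ * M₁ and W̃ = A * M₂ (columns of X̃ lie in the column space of Aᵀ and columns of W̃ in the column space of A), and suppose X̂ : Matrix (Fin N) (Fin p') ℝ and Ŵ : Matrix (Fin N) (Fin q') ℝ satisfy A * X̂ = 0 and Aᵀ * Ŵ = 0. Set Ỹ = A * X̃ and Z̃ = Aᵀ * W̃. Then for every C : Matrix (Fin p) (Fin q) ℝ, the matrix B = (fromColumns Ỹ W̃) * (fromBlocks (1 - C * Z̃ᵀ * X̃) C ((W̃ᵀ * Ỹ * C - 1) * Z̃ᵀ * X̃) (1 - W̃ᵀ * Ỹ * C)) * (fromRows X̃ᵀ Z̃ᵀ) satisfies B * X̃ = Ỹ, B * X̂ = 0, Bᵀ * W̃ = Z̃, Bᵀ * Ŵ = 0, and rank B ≤ rank A. -/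
/-! If `K = Z̃ᵀ X̃ = W̃ᵀ Ỹ` (both equal `W̃ᵀ A X̃`), the middle block matrix `G` satisfies
`G * [1; K] = [1; 0]` and `[K, 1] * G = [0, 1]`, which together with `X̃ᵀ X̃ = 1` and `W̃ᵀ W̃ = 1`
give the two interpolation conditions. The range conditions on `X̃` and `W̃` factor
`[Ỹ, W̃] = A [X̃, M₂]` and `[X̃ᵀ; Z̃ᵀ] = [M₁ᵀ; W̃ᵀ] A`, so `B = A P = Q A`; this kills `X̂` and `Ŵ`
and bounds the rank of `B`. -/

namespace Matrix

variable {R m n : Type*} [Ring R] [Fintype m] [Fintype n] [DecidableEq m] [DecidableEq n]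

def interpolationCore (K : Matrix m n R) (C : Matrix n m R) : Matrix (n ⊕ m) (n ⊕ m) R :=
  fromBlocks (1 - C * K) C ((K * C - 1) * K) (1 - K * C)

theorem interpolationCore_mul_fromRows_one_self (K : Matrix m n R) (C : Matrix n m R) :
    interpolationCore K C * fromRows (1 : Matrix n n R) K = fromRows 1 0 := by
  rw [interpolationCore, fromBlocks_mul_fromRows]
  congr 1 <;> simp only [Matrix.sub_mul, Matrix.mul_one, Matrix.one_mul, Matrix.mul_assoc] <;> abel

theorem fromCols_self_one_mul_interpolationCore (K : Matrix m n R) (C : Matrix n m R) :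
    fromCols K (1 : Matrix m m R) * interpolationCore K C = fromCols 0 1 := by
  rw [interpolationCore, fromCols_mul_fromBlocks]
  congr 1 <;> simp only [Matrix.sub_mul, Matrix.mul_sub, Matrix.mul_one, Matrix.one_mul,
    Matrix.mul_assoc] <;> abel

end Matrix

open Matrix

theorem stmt17 (N p q p' q' : ℕ) (A : Matrix (Fin N) (Fin N) ℝ)
    (Xt : Matrix (Fin N) (Fin p) ℝ) (Wt : Matrix (Fin N) (Fin q) ℝ)
    (hXt : Xtᵀ * Xt = 1) (hWt : Wtᵀ * Wt = 1)
    (hXcol : ∃ M₁ : Matrix (Fin N) (Fin p) ℝ, Xt = Aᵀ * M₁)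
    (hWcol : ∃ M₂ : Matrix (Fin N) (Fin q) ℝ, Wt = A * M₂)
    (Xh : Matrix (Fin N) (Fin p') ℝ) (Wh : Matrix (Fin N) (Fin q') ℝ)
    (hXh : A * Xh = 0) (hWh : Aᵀ * Wh = 0)
    (Yt : Matrix (Fin N) (Fin p) ℝ) (hYt : Yt = A * Xt)
    (Zt : Matrix (Fin N) (Fin q) ℝ) (hZt : Zt = Aᵀ * Wt)
    (C : Matrix (Fin p) (Fin q) ℝ) :
    ∀ B : Matrix (Fin N) (Fin N) ℝ,
      B = Matrix.fromCols Yt Wt *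
          Matrix.fromBlocks (1 - C * Ztᵀ * Xt) C
            ((Wtᵀ * Yt * C - 1) * Ztᵀ * Xt) (1 - Wtᵀ * Yt * C) *
          Matrix.fromRows Xtᵀ Ztᵀ →
      B * Xt = Yt ∧ B * Xh = 0 ∧ Bᵀ * Wt = Zt ∧ Bᵀ * Wh = 0 ∧ B.rank ≤ A.rank := by
  intro B hB
  obtain ⟨M₁, hM₁⟩ := hXcol
  obtain ⟨M₂, hM₂⟩ := hWcol
  have hK : Wtᵀ * Yt = Ztᵀ * Xt := by
    rw [hYt, hZt, transpose_mul, transpose_transpose, Matrix.mul_assoc]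
  replace hB : B = fromCols Yt Wt * interpolationCore (Ztᵀ * Xt) C * fromRows Xtᵀ Ztᵀ := by
    rw [hB, hK]
    simp only [interpolationCore, Matrix.mul_assoc]
  have hCols : fromCols Yt Wt = A * fromCols Xt M₂ := by
    rw [mul_fromCols, hYt, hM₂]
  have hRows : fromRows Xtᵀ Ztᵀ = fromRows M₁ᵀ Wtᵀ * A := by
    rw [fromRows_mul, hM₁, hZt, transpose_mul, transpose_mul, transpose_transpose]
  have hAB : B = A * (fromCols Xt M₂ * interpolationCore (Ztᵀ * Xt) C * fromRows Xtᵀ Ztᵀ) := by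
    rw [hB, hCols, Matrix.mul_assoc, Matrix.mul_assoc, Matrix.mul_assoc]
  have hBA : B = fromCols Yt Wt * interpolationCore (Ztᵀ * Xt) C * fromRows M₁ᵀ Wtᵀ * A := by
    rw [hB, hRows, Matrix.mul_assoc _ _ A]
  have hWB : Wtᵀ * B = Ztᵀ := by
    rw [hB, ← Matrix.mul_assoc, ← Matrix.mul_assoc, mul_fromCols, hK, hWt,
      fromCols_self_one_mul_interpolationCore, fromCols_mul_fromRows, Matrix.zero_mul,
      Matrix.one_mul, zero_add]
  refine ⟨?_, ?_, ?_, ?_, ?_⟩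
  · rw [hB, Matrix.mul_assoc, fromRows_mul, hXt, Matrix.mul_assoc,
      interpolationCore_mul_fromRows_one_self, fromCols_mul_fromRows,
      Matrix.mul_one, Matrix.mul_zero, add_zero]
  · rw [hBA, Matrix.mul_assoc, hXh, Matrix.mul_zero]
  · rw [← transpose_transpose Zt, ← hWB, transpose_mul, transpose_transpose]
  · rw [hAB, transpose_mul, Matrix.mul_assoc, hWh, Matrix.mul_zero]
  · rw [hBA]
    exact rank_mul_le_right _ _
end

section
/- Let N and k be natural numbers and let A, B : Matrix (Fin N) (Fin N) ℝ with rank A ≤ k and rank B ≤ k. Let X, W : Matrix (Fin N) (Fin k) ℝ be such that rank (A * X) = k and rank (Aᵀ * W) = k. If B * X = A * X and Bᵀ * W = Aᵀ * W, then B = A. (A rank-k matrix is uniquely determined among rank-≤k matrices by k well-chosen matrix-vector products with A and k with Aᵀ, so the query complexity of N×N rank-k matrices is exactly 2k.) -/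
open Matrix

/-! A rank-`k` matrix `A` with `rank (A * X) = k` has the same column space as `A * X`; the same
holds for `B`, because `B * X = A * X` and `rank B ≤ k`. So every column of `B - A` lies in the
column space of `A`. On that space `Wᵀ` is injective, as `rank (Wᵀ * A) = k`, and
`Wᵀ * (B - A) = 0`, hence `B = A`. -/

namespace Matrix

variable {l m n o K : Type*} [Field K] [Fintype n]

theorem range_mulVecLin_mul_eq_of_rank_le [Fintype o] (A : Matrix m n K) (X : Matrix n o K)
    (h : A.rank ≤ (A * X).rank) :
    LinearMap.range (A * X).mulVecLin = LinearMap.range A.mulVecLin :=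
  Submodule.eq_of_le_of_finrank_le
    (by rw [mulVecLin_mul]; exact LinearMap.range_comp_le_range _ _) h

theorem disjoint_range_ker_of_rank_le [Fintype m] (P : Matrix l m K) (A : Matrix m n K)
    (h : A.rank ≤ (P * A).rank) :
    Disjoint (LinearMap.range A.mulVecLin) (LinearMap.ker P.mulVecLin) :=
  Submodule.disjoint_ker_of_finrank_le _ (by rwa [← LinearMap.range_comp, ← mulVecLin_mul])

theorem eq_of_range_le_of_mul_eq [Fintype m] {A B : Matrix m n K} {P : Matrix l m K}
    (hB : LinearMap.range B.mulVecLin ≤ LinearMap.range A.mulVecLin)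
    (hP : Disjoint (LinearMap.range A.mulVecLin) (LinearMap.ker P.mulVecLin))
    (h : P * B = P * A) : B = A := by
  refine ext_iff_mulVec.mpr fun v ↦ sub_eq_zero.mp <| Submodule.disjoint_def.mp hP _ ?_ ?_
  · exact Submodule.sub_mem _ (hB ⟨v, rfl⟩) ⟨v, rfl⟩
  · simp only [LinearMap.mem_ker, mulVecLin_apply, mulVec_sub, mulVec_mulVec, h, sub_self]

end Matrix

theorem stmt19 (N k : ℕ) (A B : Matrix (Fin N) (Fin N) ℝ)
    (hA : A.rank ≤ k) (hB : B.rank ≤ k)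
    (X W : Matrix (Fin N) (Fin k) ℝ)
    (hAX : (A * X).rank = k) (hAW : (Aᵀ * W).rank = k)
    (h1 : B * X = A * X) (h2 : Bᵀ * W = Aᵀ * W) :
    B = A := by
  have hAk : A.rank = k := le_antisymm hA (hAX ▸ rank_mul_le_left A X)
  have hWA : (Wᵀ * A).rank = k := by
    rw [← rank_transpose, transpose_mul, transpose_transpose, hAW]
  have hrangeA := range_mulVecLin_mul_eq_of_rank_le A X (by rw [hAk, hAX])
  have hrangeB := range_mulVecLin_mul_eq_of_rank_le B X (by rw [h1, hAX]; exact hB)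
  refine eq_of_range_le_of_mul_eq (P := Wᵀ) ?_ (disjoint_range_ker_of_rank_le Wᵀ A ?_) ?_
  · rw [← hrangeA, ← hrangeB, h1]
  · rw [hAk, hWA]
  · simpa only [transpose_mul, transpose_transpose] using congrArg transpose h2
end
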